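/- arXiv:2311.08291 — 8 statements merged into one kernel-verified Lean document; each statement's English description precedes it below -/
import Mathlib

section
/- Let φ^{12}_{jk}, φ^{23}_{kl}, φ^{13}_{jl} (j,k,l ∈ {0,1}) be real numbers and set φ_{jkl} = φ^{12}_{jk} + φ^{23}_{kl} + φ^{13}_{jl}. Define η(t) = (1/8)·Σ_{k,l ∈ {0,1}} exp(i·(φ_{0kl} − φ_{1kl})·t). Then |η(t)| = (1/2)·|cos(Φ12·t/2)|·|cos(Φ13·t/2)|, where Φ12 = φ^{12}_{01} + φ^{12}_{10} − φ^{12}_{00} − φ^{12}_{11} and Φ13 = φ^{13}_{01} + φ^{13}_{10} − φ^{13}_{00} − φ^{13}_{11}. -/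
/-!
The qubit-2/qubit-3 phase `φ23` is the same for `j = 0` and `j = 1`, so it cancels from
`φ_{0kl} − φ_{1kl}`, which splits as `a_k + b_l` with `a` coming from `φ12` and `b` from `φ13`.
The double sum of `exp (i (a_k + b_l) t)` therefore factors as a product of two sums of two
unimodular numbers, and `|e^{iα} + e^{iβ}| = 2 |cos ((α − β) / 2)|`.
-/

open Complex

theorem norm_exp_I_mul_add_exp_I_mul (α β : ℝ) :
    ‖exp (I * α) + exp (I * β)‖ = 2 * |Real.cos ((α - β) / 2)| := by
  have hfactor : exp (I * α) + exp (I * β) =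
      exp (I * ((α + β) / 2 : ℝ)) * (2 * Complex.cos ((α - β) / 2 : ℝ)) := by
    rw [two_cos, mul_add, ← exp_add, ← exp_add]
    congr 2 <;> push_cast <;> ring
  rw [hfactor, norm_mul, norm_exp_I_mul_ofReal, one_mul, ← ofReal_cos, ← ofReal_ofNat,
    ← ofReal_mul, norm_real, Real.norm_eq_abs, abs_mul, abs_two]

theorem sum_sum_exp_I_mul_add {ι κ : Type*} [Fintype ι] [Fintype κ] (a : ι → ℝ) (b : κ → ℝ) :
    ∑ k, ∑ l, exp (I * (a k + b l : ℝ)) = (∑ k, exp (I * a k)) * ∑ l, exp (I * b l) := by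
  simp only [Finset.sum_mul_sum, ← exp_add, ofReal_add, mul_add]

theorem sub_eq_sub_add_sub_of_forall_eq_add_add {α β γ : Type*} {φ12 : α → β → ℝ} {φ23 : β → γ → ℝ}
    {φ13 : α → γ → ℝ} {φ : α → β → γ → ℝ}
    (hφ : ∀ j k l, φ j k l = φ12 j k + φ23 k l + φ13 j l) (j j' : α) (k : β) (l : γ) :
    φ j k l - φ j' k l = (φ12 j k - φ12 j' k) + (φ13 j l - φ13 j' l) := by
  rw [hφ, hφ]
  ring

/-- In the three-body QGEM system with total phases
`φ_{jkl} = φ12_{jk} + φ23_{kl} + φ13_{jl}`, the quantity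
`η(t) = (1/8)·Σ_{k,l} exp(i(φ_{0kl} − φ_{1kl})t)` satisfies
`|η(t)| = (1/2)·|cos(Φ12·t/2)|·|cos(Φ13·t/2)|` where `Φ12`, `Φ13` are the
signed entangling phases of pairs (1,2) and (1,3). -/
theorem three_body_eta_factorization
    (φ12 φ23 φ13 : Fin 2 → Fin 2 → ℝ) (t : ℝ)
    (φ : Fin 2 → Fin 2 → Fin 2 → ℝ)
    (hφ : ∀ j k l, φ j k l = φ12 j k + φ23 k l + φ13 j l)
    (η : ℂ)
    (hη : η = (1 / 8 : ℂ) * ∑ k : Fin 2, ∑ l : Fin 2,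
      Complex.exp (Complex.I * Complex.ofReal ((φ 0 k l - φ 1 k l) * t))) :
    ‖η‖ =
      (1 / 2) * |Real.cos ((φ12 0 1 + φ12 1 0 - φ12 0 0 - φ12 1 1) * t / 2)| *
        |Real.cos ((φ13 0 1 + φ13 1 0 - φ13 0 0 - φ13 1 1) * t / 2)| := by
  have hfactor : η = 1 / 8 * ((∑ k, exp (I * ((φ12 0 k - φ12 1 k) * t : ℝ))) *
      ∑ l, exp (I * ((φ13 0 l - φ13 1 l) * t : ℝ))) := by
    simp only [hη, sub_eq_sub_add_sub_of_forall_eq_add_add hφ, add_mul, sum_sum_exp_I_mul_add]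
  have harg12 : ((φ12 0 0 - φ12 1 0) * t - (φ12 0 1 - φ12 1 1) * t) / 2 =
      -((φ12 0 1 + φ12 1 0 - φ12 0 0 - φ12 1 1) * t / 2) := by ring
  have harg13 : ((φ13 0 0 - φ13 1 0) * t - (φ13 0 1 - φ13 1 1) * t) / 2 =
      -((φ13 0 1 + φ13 1 0 - φ13 0 0 - φ13 1 1) * t / 2) := by ring
  rw [hfactor, norm_mul, norm_mul, Fin.sum_univ_two, Fin.sum_univ_two,
    norm_exp_I_mul_add_exp_I_mul, norm_exp_I_mul_add_exp_I_mul, harg12, harg13,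
    Real.cos_neg, Real.cos_neg]
  norm_num
  ring
end

section
/- Let a and b be nonzero real numbers such that a/b is irrational. Then for every t > 0, cos²(a·t/2)·cos²(b·t/2) < 1; that is, the three-body concurrence C_{p|qr}(t) = √(1 − cos²(a·t/2)·cos²(b·t/2)) is strictly positive for all t > 0. -/
open Real

lemma cos_sq_eq_one_iff (x : ℝ) (h : Real.cos x ^ 2 = 1) : ∃ n : ℤ, (n : ℝ) * Real.pi = x := by
  have hs : Real.sin x = 0 := by
    have := Real.sin_sq_add_cos_sq x
    nlinarith [Real.sin_sq_add_cos_sq x]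
  exact Real.sin_eq_zero_iff.mp hs

/-- If `a`, `b` are nonzero and `a/b` is irrational, then for all `t > 0`
`cos²(a·t/2)·cos²(b·t/2) < 1`, i.e. the three-body concurrence
`C_{p|qr}(t) = √(1 − cos²(a·t/2)·cos²(b·t/2))` is strictly positive. -/
theorem three_body_concurrence_positive_of_irrational_ratio
    (a b : ℝ) (ha : a ≠ 0) (hb : b ≠ 0) (hab : Irrational (a / b)) :
    ∀ t : ℝ, 0 < t →
      Real.cos (a * t / 2) ^ 2 * Real.cos (b * t / 2) ^ 2 < 1 ∧
      0 < Real.sqrt (1 - Real.cos (a * t / 2) ^ 2 * Real.cos (b * t / 2) ^ 2) := by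
  intro t ht
  have key : Real.cos (a * t / 2) ^ 2 * Real.cos (b * t / 2) ^ 2 < 1 := by
    by_contra h
    push_neg at h
    have h1 : Real.cos (a * t / 2) ^ 2 ≤ 1 := Real.cos_sq_le_one _
    have h2 : Real.cos (b * t / 2) ^ 2 ≤ 1 := Real.cos_sq_le_one _
    have h1' : (0:ℝ) ≤ Real.cos (a * t / 2) ^ 2 := sq_nonneg _
    have h2' : (0:ℝ) ≤ Real.cos (b * t / 2) ^ 2 := sq_nonneg _
    have e1 : Real.cos (a * t / 2) ^ 2 = 1 := by nlinarith
    have e2 : Real.cos (b * t / 2) ^ 2 = 1 := by nlinarith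
    obtain ⟨n, hn⟩ := cos_sq_eq_one_iff _ e1
    obtain ⟨m, hm⟩ := cos_sq_eq_one_iff _ e2
    have hpi := Real.pi_pos
    have hn0 : (n : ℝ) ≠ 0 := by
      intro h0
      rw [h0, zero_mul] at hn
      have : a * t = 0 := by linarith
      rcases mul_eq_zero.mp this with h | h
      · exact ha h
      · exact ht.ne' h
    have hm0 : (m : ℝ) ≠ 0 := by
      intro h0
      rw [h0, zero_mul] at hm
      have : b * t = 0 := by linarith
      rcases mul_eq_zero.mp this with h | h
      · exact hb h
      · exact ht.ne' h
    have : a / b = (n : ℝ) / (m : ℝ) := by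
      have ea : a = 2 * n * Real.pi / t := by
        field_simp at hn ⊢; linarith
      have eb : b = 2 * m * Real.pi / t := by
        field_simp at hm ⊢; linarith
      rw [ea, eb]
      field_simp
    rw [this] at hab
    exact hab ⟨(n : ℚ) / m, by push_cast; ring⟩
  refine ⟨key, Real.sqrt_pos.mpr (by linarith)⟩
end

section
/- (Separability) Let Φ12, Φ23, Φ13 > 0 be real numbers such that Φ23/Φ12 and Φ13/Φ12 are rational. Then there exists t > 0 and integers n12, n23, n13 such that Φ12·t = 2·n12·π, Φ23·t = 2·n23·π and Φ13·t = 2·n13·π simultaneously; consequently, at this time the concurrences across all three bipartitions, C_{1|23}(t) = √(1 − cos²(Φ12·t/2)·cos²(Φ13·t/2)), C_{2|13}(t) = √(1 − cos²(Φ12·t/2)·cos²(Φ23·t/2)) and C_{3|12}(t) = √(1 − cos²(Φ13·t/2)·cos²(Φ23·t/2)), all vanish, so the three-body state becomes fully separable (and does so periodically). -/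
open Real

lemma cos_sq_of_two_int_mul_pi (x : ℝ) (n : ℤ) (h : x = 2 * (n : ℝ) * π) :
    Real.cos (x / 2) ^ 2 = 1 := by
  have : x / 2 = (n : ℝ) * π := by rw [h]; ring
  rw [this, ← sq_abs, Real.abs_cos_int_mul_pi]; norm_num

/-- (Separability) If the entangling phases `Φ12, Φ23, Φ13 > 0` have pairwise
rational ratios (relative to `Φ12`), then there is a time `t > 0` at which
`Φ12·t`, `Φ23·t`, `Φ13·t` are simultaneously integer multiples of `2π`, and at
that time all three bipartite concurrences vanish, so the three-body state is
fully separable. -/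
theorem three_body_separability
    (Φ12 Φ23 Φ13 : ℝ) (h12 : 0 < Φ12) (h23 : 0 < Φ23) (h13 : 0 < Φ13)
    (hr23 : ∃ q : ℚ, Φ23 / Φ12 = (q : ℝ)) (hr13 : ∃ q : ℚ, Φ13 / Φ12 = (q : ℝ)) :
    ∃ t : ℝ, 0 < t ∧ ∃ n12 n23 n13 : ℤ,
      Φ12 * t = 2 * (n12 : ℝ) * π ∧
      Φ23 * t = 2 * (n23 : ℝ) * π ∧
      Φ13 * t = 2 * (n13 : ℝ) * π ∧
      Real.sqrt (1 - Real.cos (Φ12 * t / 2) ^ 2 * Real.cos (Φ13 * t / 2) ^ 2) = 0 ∧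
      Real.sqrt (1 - Real.cos (Φ12 * t / 2) ^ 2 * Real.cos (Φ23 * t / 2) ^ 2) = 0 ∧
      Real.sqrt (1 - Real.cos (Φ13 * t / 2) ^ 2 * Real.cos (Φ23 * t / 2) ^ 2) = 0 := by
  obtain ⟨a, ha⟩ := hr23
  obtain ⟨b, hb⟩ := hr13
  set t : ℝ := 2 * ((a.den : ℝ) * (b.den : ℝ)) * π / Φ12 with ht
  have hπ := Real.pi_pos
  have hadpos : (0 : ℝ) < (a.den : ℝ) := by exact_mod_cast a.pos
  have hbdpos : (0 : ℝ) < (b.den : ℝ) := by exact_mod_cast b.pos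
  have htpos : 0 < t := by
    apply div_pos _ h12; positivity
  have e12 : Φ12 * t = 2 * ((a.den * b.den : ℤ) : ℝ) * π := by
    rw [ht]; push_cast; field_simp
  have ha' : Φ23 = (a : ℝ) * Φ12 := by
    field_simp at ha; linarith [ha]
  have hb' : Φ13 = (b : ℝ) * Φ12 := by
    field_simp at hb; linarith [hb]
  have hacast : ((a.num : ℝ)) = (a : ℝ) * (a.den : ℝ) := by
    rw [Rat.cast_def]; field_simp
  have hbcast : ((b.num : ℝ)) = (b : ℝ) * (b.den : ℝ) := by
    rw [Rat.cast_def]; field_simp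
  have e23 : Φ23 * t = 2 * ((a.num * b.den : ℤ) : ℝ) * π := by
    rw [ha', ht]; push_cast [hacast]; field_simp
  have e13 : Φ13 * t = 2 * ((b.num * a.den : ℤ) : ℝ) * π := by
    rw [hb', ht]; push_cast [hbcast]; field_simp
  refine ⟨t, htpos, (a.den * b.den : ℤ), (a.num * b.den : ℤ), (b.num * a.den : ℤ),
    e12, e23, e13, ?_, ?_, ?_⟩ <;>
  · rw [cos_sq_of_two_int_mul_pi _ _ (by assumption), cos_sq_of_two_int_mul_pi _ _ (by assumption)]
    norm_num
end

section
/- (Genuine three-body entanglement) Let Φ12, Φ23, Φ13 ≥ 0 be the three entangling phases. There exists t > 0 such that all three concurrences C_{1|23}(t) = √(1 − cos²(Φ12·t/2)·cos²(Φ13·t/2)), C_{2|13}(t) = √(1 − cos²(Φ12·t/2)·cos²(Φ23·t/2)) and C_{3|12}(t) = √(1 − cos²(Φ13·t/2)·cos²(Φ23·t/2)) are strictly positive (i.e. the time evolution leads to genuine three-body entanglement) if and only if at least two of Φ12, Φ23, Φ13 are nonzero. -/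
open Real

private lemma cossq_lt_one {x : ℝ} (h1 : 0 < x) (h2 : x < Real.pi) :
    Real.cos x ^ 2 < 1 := by
  have hs := Real.sin_pos_of_pos_of_lt_pi h1 h2
  nlinarith [Real.sin_sq_add_cos_sq x]

private lemma prod_lt_one {a b : ℝ} (ha : a ^ 2 ≤ 1) (hb : b ^ 2 < 1) :
    a ^ 2 * b ^ 2 < 1 := by nlinarith [sq_nonneg a, sq_nonneg b]

/-- (Genuine three-body entanglement) There exists `t > 0` at which all three
bipartite concurrences of the time-evolved three-body QGEM state are strictly
positive if and only if at least two of the entangling phases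
`Φ12, Φ23, Φ13 ≥ 0` are nonzero. -/
theorem genuine_three_body_entanglement
    (Φ12 Φ23 Φ13 : ℝ) (h12 : 0 ≤ Φ12) (h23 : 0 ≤ Φ23) (h13 : 0 ≤ Φ13) :
    (∃ t : ℝ, 0 < t ∧
      0 < Real.sqrt (1 - Real.cos (Φ12 * t / 2) ^ 2 * Real.cos (Φ13 * t / 2) ^ 2) ∧
      0 < Real.sqrt (1 - Real.cos (Φ12 * t / 2) ^ 2 * Real.cos (Φ23 * t / 2) ^ 2) ∧
      0 < Real.sqrt (1 - Real.cos (Φ13 * t / 2) ^ 2 * Real.cos (Φ23 * t / 2) ^ 2)) ↔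
    ((Φ12 ≠ 0 ∧ Φ23 ≠ 0) ∨ (Φ12 ≠ 0 ∧ Φ13 ≠ 0) ∨ (Φ23 ≠ 0 ∧ Φ13 ≠ 0)) := by
  constructor
  · rintro ⟨t, ht, hA, hB, hC⟩
    by_contra h
    push_neg at h
    obtain ⟨p1, p2, p3⟩ := h
    rcases eq_or_ne Φ12 0 with e12 | e12
    · rcases eq_or_ne Φ23 0 with e23 | e23
      · simp [e12, e23] at hB
      · have e13 := p3 e23
        simp [e12, e13] at hA
    · have e23 := p1 e12
      have e13 := p2 e12
      simp [e23, e13] at hC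
  · intro h
    set M : ℝ := max Φ12 (max Φ23 Φ13) with hM
    have hMpos : 0 < M := by
      rcases h with ⟨a, b⟩ | ⟨a, b⟩ | ⟨a, b⟩ <;>
        [exact lt_max_of_lt_left (lt_of_le_of_ne h12 (Ne.symm a));
         exact lt_max_of_lt_left (lt_of_le_of_ne h12 (Ne.symm a));
         exact lt_max_of_lt_right (lt_max_of_lt_left (lt_of_le_of_ne h23 (Ne.symm a)))]
    refine ⟨Real.pi / M, div_pos Real.pi_pos hMpos, ?_, ?_, ?_⟩
    -- key: for Φ ≠ 0 (hence > 0), cos(Φ t /2)^2 < 1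
    all_goals {
      have key : ∀ Φ : ℝ, 0 ≤ Φ → Φ ≠ 0 → Φ ≤ M →
          Real.cos (Φ * (Real.pi / M) / 2) ^ 2 < 1 := by
        intro Φ h0 hne hle
        have hΦ : 0 < Φ := lt_of_le_of_ne h0 (Ne.symm hne)
        apply cossq_lt_one
        · positivity
        · rw [div_lt_iff₀ (by norm_num : (0:ℝ) < 2)] at *
          calc Φ * (Real.pi / M) = Φ / M * Real.pi := by ring
            _ ≤ 1 * Real.pi := by
                apply mul_le_mul_of_nonneg_right _ Real.pi_pos.le
                exact (div_le_one hMpos).mpr hle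
            _ < Real.pi * 2 := by nlinarith [Real.pi_pos]
      have le1 : ∀ x : ℝ, Real.cos x ^ 2 ≤ 1 := fun x => Real.cos_sq_le_one x
      have m12 : Φ12 ≤ M := le_max_left _ _
      have m23 : Φ23 ≤ M := le_trans (le_max_left _ _) (le_max_right _ _)
      have m13 : Φ13 ≤ M := le_trans (le_max_right _ _) (le_max_right _ _)
      apply Real.sqrt_pos.mpr
      rcases h with ⟨a, b⟩ | ⟨a, b⟩ | ⟨a, b⟩ <;>
      · first
        | (have := key _ h12 a m12; have := le1 (Φ13 * (Real.pi / M) / 2);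
           have := le1 (Φ23 * (Real.pi / M) / 2); nlinarith)
        | (have := key _ h23 a m23; have := key _ h13 b m13;
           have := le1 (Φ12 * (Real.pi / M) / 2); nlinarith)
        | (have := key _ h13 b m13; have := le1 (Φ12 * (Real.pi / M) / 2);
           have := le1 (Φ23 * (Real.pi / M) / 2); nlinarith)
        | (have := key _ h23 b m23; have := le1 (Φ12 * (Real.pi / M) / 2);
           have := le1 (Φ13 * (Real.pi / M) / 2); nlinarith)
    }
end

section
/- (Sustainability) Let Φ12, Φ23, Φ13 be nonzero real numbers such that each of the ratios Φ12/Φ23, Φ23/Φ13 and Φ12/Φ13 is irrational. Then for every t > 0, all three concurrences C_{1|23}(t) = √(1 − cos²(Φ12·t/2)·cos²(Φ13·t/2)), C_{2|13}(t) = √(1 − cos²(Φ12·t/2)·cos²(Φ23·t/2)) and C_{3|12}(t) = √(1 − cos²(Φ13·t/2)·cos²(Φ23·t/2)) are strictly positive; that is, the state is genuine three-body entangled at all times t > 0, never becoming biseparable or fully separable. -/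
open Real

lemma cos_sq_mul_lt_one (a b : ℝ) (ha : a ≠ 0) (hb : b ≠ 0)
    (hir : Irrational (a / b)) (t : ℝ) (ht : 0 < t) :
    Real.cos (a * t / 2) ^ 2 * Real.cos (b * t / 2) ^ 2 < 1 := by
  have h1 : Real.cos (a * t / 2) ^ 2 ≤ 1 := Real.cos_sq_le_one _
  have h2 : Real.cos (b * t / 2) ^ 2 ≤ 1 := Real.cos_sq_le_one _
  have hn1 : 0 ≤ Real.cos (a * t / 2) ^ 2 := sq_nonneg _
  have hn2 : 0 ≤ Real.cos (b * t / 2) ^ 2 := sq_nonneg _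
  rcases lt_or_eq_of_le h1 with h | h
  · nlinarith
  rcases lt_or_eq_of_le h2 with h' | h'
  · nlinarith
  -- both equal 1
  exfalso
  have hsa : Real.sin (a * t / 2) = 0 := by
    have := Real.sin_sq_add_cos_sq (a * t / 2)
    nlinarith [sq_nonneg (Real.sin (a * t / 2))]
  have hsb : Real.sin (b * t / 2) = 0 := by
    have := Real.sin_sq_add_cos_sq (b * t / 2)
    nlinarith [sq_nonneg (Real.sin (b * t / 2))]
  obtain ⟨k, hk⟩ := Real.sin_eq_zero_iff.mp hsa
  obtain ⟨m, hm⟩ := Real.sin_eq_zero_iff.mp hsb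
  have hm0 : (m : ℝ) ≠ 0 := by
    intro h0
    rw [h0, zero_mul] at hm
    have : b * t = 0 := by linarith
    exact hb (by rcases mul_eq_zero.mp this with h | h; exact h; exact absurd h ht.ne')
  have hpi : (0:ℝ) < Real.pi := Real.pi_pos
  have key : (a * m) * t = (k * b) * t := by
    linear_combination (-2 * (m : ℝ)) * hk + (2 * (k : ℝ)) * hm
  have key2 : a * m = k * b := mul_right_cancel₀ ht.ne' key
  have : a / b = (k : ℝ) / (m : ℝ) := by
    rw [div_eq_div_iff hb hm0] ; linarith
  exact hir ⟨(k : ℚ) / m, by push_cast; rw [this]⟩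

/-- (Sustainability) If the entangling phases `Φ12, Φ23, Φ13` are all nonzero
and each pairwise ratio is irrational, then at every time `t > 0` all three
bipartite concurrences are strictly positive: the state is genuinely
three-body entangled at all times, never becoming biseparable or separable. -/
theorem three_body_sustained_entanglement
    (Φ12 Φ23 Φ13 : ℝ) (h12 : Φ12 ≠ 0) (h23 : Φ23 ≠ 0) (h13 : Φ13 ≠ 0)
    (hr1 : Irrational (Φ12 / Φ23)) (hr2 : Irrational (Φ23 / Φ13))
    (hr3 : Irrational (Φ12 / Φ13)) :
    ∀ t : ℝ, 0 < t →
      0 < Real.sqrt (1 - Real.cos (Φ12 * t / 2) ^ 2 * Real.cos (Φ13 * t / 2) ^ 2) ∧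
      0 < Real.sqrt (1 - Real.cos (Φ12 * t / 2) ^ 2 * Real.cos (Φ23 * t / 2) ^ 2) ∧
      0 < Real.sqrt (1 - Real.cos (Φ13 * t / 2) ^ 2 * Real.cos (Φ23 * t / 2) ^ 2) := by
  intro t ht
  refine ⟨?_, ?_, ?_⟩ <;> apply Real.sqrt_pos.mpr <;> rw [sub_pos]
  · exact cos_sq_mul_lt_one _ _ h12 h13 hr3 t ht
  · exact cos_sq_mul_lt_one _ _ h12 h23 hr1 t ht
  · rw [mul_comm]; exact cos_sq_mul_lt_one _ _ h23 h13 hr2 t ht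
end

section
/- (GHZ entanglement) Let Φ ≠ 0 be a real number, let n12, n13 ≥ 0 be integers, and suppose Φ12 = (2·n12 + 1)·Φ and Φ13 = (2·n13 + 1)·Φ, while Φ23 ≥ 0 is arbitrary. Then for every integer n ≥ 0, at time t = (2·n + 1)·π/Φ all three concurrences equal 1: C_{1|23}(t) = √(1 − cos²(Φ12·t/2)·cos²(Φ13·t/2)) = 1, C_{2|13}(t) = √(1 − cos²(Φ12·t/2)·cos²(Φ23·t/2)) = 1 and C_{3|12}(t) = √(1 − cos²(Φ13·t/2)·cos²(Φ23·t/2)) = 1; i.e. the state periodically evolves into a maximally entangled GHZ-type state with 1 ebit of entanglement across every bipartition. -/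
open Real

lemma cos_odd_mul (a m : ℕ) (Φ : ℝ) (hΦ : Φ ≠ 0) :
    Real.cos ((2 * (a : ℝ) + 1) * Φ * ((2 * (m : ℝ) + 1) * π / Φ) / 2) = 0 := by
  have h : (2 * (a : ℝ) + 1) * Φ * ((2 * (m : ℝ) + 1) * π / Φ) / 2
      = (2 * ((2 * a * m + a + m : ℕ) : ℤ) + 1) * π / 2 := by
    push_cast
    field_simp
    ring
  rw [h]
  exact Real.cos_eq_zero_iff.2 ⟨_, rfl⟩

/-- (GHZ entanglement) If `Φ12 = (2n12+1)Φ` and `Φ13 = (2n13+1)Φ` with `Φ ≠ 0`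
and `Φ23 ≥ 0` arbitrary, then at the times `t = (2n+1)π/Φ` all three bipartite
concurrences equal 1: the state periodically becomes a maximally entangled
GHZ-type state with 1 ebit across every bipartition. -/
theorem three_body_GHZ_entanglement
    (Φ : ℝ) (hΦ : Φ ≠ 0) (n12 n13 : ℕ) (Φ12 Φ13 Φ23 : ℝ)
    (h12 : Φ12 = (2 * (n12 : ℝ) + 1) * Φ) (h13 : Φ13 = (2 * (n13 : ℝ) + 1) * Φ)
    (h23 : 0 ≤ Φ23) :
    ∀ n : ℕ,
      Real.sqrt (1 - Real.cos (Φ12 * ((2 * (n : ℝ) + 1) * π / Φ) / 2) ^ 2 *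
        Real.cos (Φ13 * ((2 * (n : ℝ) + 1) * π / Φ) / 2) ^ 2) = 1 ∧
      Real.sqrt (1 - Real.cos (Φ12 * ((2 * (n : ℝ) + 1) * π / Φ) / 2) ^ 2 *
        Real.cos (Φ23 * ((2 * (n : ℝ) + 1) * π / Φ) / 2) ^ 2) = 1 ∧
      Real.sqrt (1 - Real.cos (Φ13 * ((2 * (n : ℝ) + 1) * π / Φ) / 2) ^ 2 *
        Real.cos (Φ23 * ((2 * (n : ℝ) + 1) * π / Φ) / 2) ^ 2) = 1 := by
  intro n
  have c12 : Real.cos (Φ12 * ((2 * (n : ℝ) + 1) * π / Φ) / 2) = 0 := by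
    rw [h12]; exact cos_odd_mul n12 n Φ hΦ
  have c13 : Real.cos (Φ13 * ((2 * (n : ℝ) + 1) * π / Φ) / 2) = 0 := by
    rw [h13]; exact cos_odd_mul n13 n Φ hΦ
  rw [c12, c13]
  norm_num
end

section
/- (λ-factorization, Appendix) Let N ≥ 2 and 1 ≤ k ≤ N. For each pair p < q in {1,…,N} let φ_{pq} : {0,1}×{0,1} → ℝ be given, and for a bit string J ∈ {0,1}^N set φ_J = Σ_{p<q} φ_{pq}(J_p, J_q). Fix t ∈ ℝ and bit strings x, y ∈ {0,1}^k, and define λ_{xy}(t) = Σ_{j ∈ {0,1}^{N−k}} exp(i·(φ_{x⌢j} − φ_{y⌢j})·t), where x⌢j denotes concatenation. Then |λ_{xy}(t)|² = 2^{2(N−k)} · Π_{b=k+1}^{N} cos²( (t/2)·Σ_{a=1}^{k} S_a·Φ_{ab} ), where S_a = y_a − x_a ∈ {−1,0,+1} and Φ_{ab} = φ_{ab}(0,1) + φ_{ab}(1,0) − φ_{ab}(0,0) − φ_{ab}(1,1) is the signed entangling phase of the pair (a,b). -/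
/-!
Splitting `J = x ⌢ j` into the first `k` and the last `m` qubits, the pairs inside the first block
contribute a phase independent of `j`, the pairs inside the last block cancel in
`φ_{x⌢j} − φ_{y⌢j}`, and each cross pair `(a, b)` contributes a term depending on `j` only
through `j_b`. So the phase difference is a constant plus `Σ_b g_b(j_b)`, and `λ_{xy}(t)` factors
as a unimodular constant times `Π_b (e^{i g_b(0) t} + e^{i g_b(1) t})`, whose factors have squared
modulus `4 cos²((g_b(0) − g_b(1)) t / 2)`; finally `g_b(0) − g_b(1) = −Σ_a S_a Φ_{ab}`.
-/

open Finset

def pairPhase {n : ℕ} {β : Type*} (φ : Fin n → Fin n → β → β → ℝ) (J : Fin n → β) : ℝ :=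
  ∑ p, ∑ q, if p < q then φ p q (J p) (J q) else 0

def entanglingPhase (f : Fin 2 → Fin 2 → ℝ) : ℝ :=
  f 0 1 + f 1 0 - f 0 0 - f 1 1

theorem pairPhase_append {k m : ℕ} {β : Type*} (φ : Fin (k + m) → Fin (k + m) → β → β → ℝ)
    (x : Fin k → β) (j : Fin m → β) :
    pairPhase φ (Fin.append x j) =
      pairPhase (fun a a' => φ (Fin.castAdd m a) (Fin.castAdd m a')) x
        + ∑ a, ∑ b, φ (Fin.castAdd m a) (Fin.natAdd k b) (x a) (j b)
        + pairPhase (fun b b' => φ (Fin.natAdd k b) (Fin.natAdd k b')) j := by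
  have cross_lt (a : Fin k) (b : Fin m) : Fin.castAdd m a < Fin.natAdd k b := by
    simp only [Fin.lt_def, Fin.val_castAdd, Fin.val_natAdd]; omega
  have cross_not_lt (a : Fin k) (b : Fin m) : ¬ Fin.natAdd k b < Fin.castAdd m a :=
    (cross_lt a b).not_gt
  simp only [pairPhase, Fin.sum_univ_add, Fin.append_left, Fin.append_right, cross_lt,
    cross_not_lt, (Fin.strictMono_castAdd m).lt_iff_lt, Fin.natAdd_lt_natAdd_iff, if_true,
    if_false, sum_const_zero, add_zero, sum_add_distrib]
  ring

theorem sub_sub_sub_eq_neg_mul_entanglingPhase (f : Fin 2 → Fin 2 → ℝ) (u v : Fin 2) :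
    (f u 0 - f v 0) - (f u 1 - f v 1) = -(((v : ℕ) - (u : ℕ) : ℝ) * entanglingPhase f) := by
  fin_cases u <;> fin_cases v <;> simp [entanglingPhase] <;> ring

theorem norm_sum_exp_add_sum_eq_prod {ι β : Type*} [Fintype ι] [DecidableEq ι] [Fintype β]
    (c : ℝ) (g : ι → β → ℝ) :
    ‖∑ j : ι → β, Complex.exp (Complex.I * ↑(c + ∑ b, g b (j b)))‖
      = ∏ b, ‖∑ ε, Complex.exp (Complex.I * ↑(g b ε))‖ := by
  have factor : ∑ j : ι → β, Complex.exp (Complex.I * ↑(c + ∑ b, g b (j b)))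
      = Complex.exp (Complex.I * c) * ∏ b, ∑ ε, Complex.exp (Complex.I * ↑(g b ε)) := by
    rw [Fintype.prod_sum, mul_sum]
    refine sum_congr rfl fun j _ => ?_
    rw [← Complex.exp_sum, ← Complex.exp_add]
    push_cast
    rw [mul_add, mul_sum]
  rw [factor, norm_mul, Complex.norm_exp_I_mul_ofReal, one_mul, norm_prod]

theorem norm_exp_I_mul_add_exp_I_mul_sq (α β : ℝ) :
    ‖Complex.exp (Complex.I * α) + Complex.exp (Complex.I * β)‖ ^ 2
      = 4 * Real.cos ((α - β) / 2) ^ 2 := by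
  have cartesian : Complex.exp (Complex.I * α) + Complex.exp (Complex.I * β)
      = ↑(Real.cos α + Real.cos β) + ↑(Real.sin α + Real.sin β) * Complex.I := by
    rw [mul_comm Complex.I, mul_comm Complex.I, Complex.exp_mul_I, Complex.exp_mul_I]
    push_cast [Complex.ofReal_cos, Complex.ofReal_sin]
    ring
  rw [cartesian, Complex.sq_norm, Complex.normSq_add_mul_I, Real.cos_sq,
    show 2 * ((α - β) / 2) = α - β by ring, Real.cos_sub]
  linear_combination Real.sin_sq_add_cos_sq α + Real.sin_sq_add_cos_sq β

theorem lambda_factorization_general (k m : ℕ)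
    (φ : Fin (k + m) → Fin (k + m) → Fin 2 → Fin 2 → ℝ) (t : ℝ)
    (x y : Fin k → Fin 2)
    (phiJ : (Fin (k + m) → Fin 2) → ℝ)
    (hphiJ : ∀ J, phiJ J = ∑ p, ∑ q, if p < q then φ p q (J p) (J q) else 0)
    (lam : ℂ)
    (hlam : lam = ∑ j : Fin m → Fin 2,
      Complex.exp (Complex.I *
        Complex.ofReal ((phiJ (Fin.append x j) - phiJ (Fin.append y j)) * t))) :
    ‖lam‖ ^ 2 = 2 ^ (2 * m) *
      ∏ b : Fin m,
        Real.cos ((t / 2) * ∑ a : Fin k,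
          (((y a : ℕ) : ℝ) - ((x a : ℕ) : ℝ)) *
            (φ (Fin.castAdd m a) (Fin.natAdd k b) 0 1 +
             φ (Fin.castAdd m a) (Fin.natAdd k b) 1 0 -
             φ (Fin.castAdd m a) (Fin.natAdd k b) 0 0 -
             φ (Fin.castAdd m a) (Fin.natAdd k b) 1 1)) ^ 2 := by
  set Φ : Fin k → Fin m → Fin 2 → Fin 2 → ℝ :=
    fun a b => φ (Fin.castAdd m a) (Fin.natAdd k b)
  set g : Fin m → Fin 2 → ℝ := fun b ε => ∑ a, (Φ a b (x a) ε - Φ a b (y a) ε) * t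
  set c := (pairPhase (fun a a' => φ (Fin.castAdd m a) (Fin.castAdd m a')) x
    - pairPhase (fun a a' => φ (Fin.castAdd m a) (Fin.castAdd m a')) y) * t
  have phase_split (j : Fin m → Fin 2) :
      (phiJ (Fin.append x j) - phiJ (Fin.append y j)) * t = c + ∑ b, g b (j b) := by
    have cross : ∑ b, g b (j b)
        = (∑ a, ∑ b, Φ a b (x a) (j b) - ∑ a, ∑ b, Φ a b (y a) (j b)) * t := by
      simp only [g, ← sum_sub_distrib, sum_mul]
      exact sum_comm
    rw [cross, show phiJ = pairPhase φ from funext hphiJ, pairPhase_append, pairPhase_append]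
    ring
  have phase_gap (b : Fin m) :
      g b 0 - g b 1 = -(t * ∑ a, ((y a : ℕ) - (x a : ℕ) : ℝ) * entanglingPhase (Φ a b)) := by
    simp only [g, ← sum_sub_distrib, mul_sum, ← sum_neg_distrib]
    refine sum_congr rfl fun a _ => ?_
    linear_combination t * sub_sub_sub_eq_neg_mul_entanglingPhase (Φ a b) (x a) (y a)
  simp only [hlam, phase_split]
  rw [norm_sum_exp_add_sum_eq_prod, ← prod_pow]
  simp only [Fin.sum_univ_two, norm_exp_I_mul_add_exp_I_mul_sq, prod_mul_distrib, prod_const,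
    card_univ, Fintype.card_fin, pow_mul, show (2 : ℝ) ^ 2 = 4 by norm_num]
  congr 1
  refine prod_congr rfl fun b _ => ?_
  rw [phase_gap, neg_div, Real.cos_neg]
  congr 2
  simp only [entanglingPhase, Φ]
  ring

/-- (λ-factorization) Writing `N = k + m`, with total phases
`φ_J = Σ_{p<q} φ_{pq}(J_p, J_q)` for bit strings `J : Fin (k+m) → Fin 2`, the
quantity `λ_{xy}(t) = Σ_{j} exp(i(φ_{x⌢j} − φ_{y⌢j})t)` satisfies
`|λ_{xy}(t)|² = 2^{2(N−k)}·Π_b cos²((t/2)·Σ_a S_a Φ_{ab})`, where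
`S_a = y_a − x_a` and `Φ_{ab}` is the signed entangling phase of pair (a,b). -/
theorem lambda_factorization (k m : ℕ) (hk : 1 ≤ k) (hN : 2 ≤ k + m)
    (φ : Fin (k + m) → Fin (k + m) → Fin 2 → Fin 2 → ℝ) (t : ℝ)
    (x y : Fin k → Fin 2)
    (phiJ : (Fin (k + m) → Fin 2) → ℝ)
    (hphiJ : ∀ J, phiJ J = ∑ p, ∑ q, if p < q then φ p q (J p) (J q) else 0)
    (lam : ℂ)
    (hlam : lam = ∑ j : Fin m → Fin 2,
      Complex.exp (Complex.I *
        Complex.ofReal ((phiJ (Fin.append x j) - phiJ (Fin.append y j)) * t))) :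
    ‖lam‖ ^ 2 = 2 ^ (2 * m) *
      ∏ b : Fin m,
        Real.cos ((t / 2) * ∑ a : Fin k,
          (((y a : ℕ) : ℝ) - ((x a : ℕ) : ℝ)) *
            (φ (Fin.castAdd m a) (Fin.natAdd k b) 0 1 +
             φ (Fin.castAdd m a) (Fin.natAdd k b) 1 0 -
             φ (Fin.castAdd m a) (Fin.natAdd k b) 0 0 -
             φ (Fin.castAdd m a) (Fin.natAdd k b) 1 1)) ^ 2 :=
  lambda_factorization_general k m φ t x y phiJ hphiJ lam hlam
end

section
/- (I-concurrence Theorem) Let N ≥ 2 and 1 ≤ k ≤ ⌊N/2⌋. Let the time-evolved N-body state be the unit vector ψ_t : {0,1}^N → ℂ with ψ_t(J) = 2^{−N/2}·exp(i·t·Σ_{p<q} φ_{pq}(J_p,J_q)), and let ρ(t) be the 2^k × 2^k reduced density matrix of the first k qubits, with entries ρ(t)_{xy} = Σ_{j ∈ {0,1}^{N−k}} ψ_t(x⌢j)·conj(ψ_t(y⌢j)) for x, y ∈ {0,1}^k. Then the squared I-concurrence across the bipartition (1,…,k)|(k+1,…,N) satisfies 2·(1 − Σ_{x,y}|ρ(t)_{xy}|²)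 = (2^k − 1)/2^{k−1} − 2^{2−k}·Λ(t), where Λ(t) = Σ_{l=1}^{k} 2^{−l} · Σ_{A ⊆ {1,…,k}, |A| = l, A = {a_1 < … < a_l}} Σ_{(s_1,…,s_{l−1}) ∈ {0,1}^{l−1}} Π_{b=k+1}^{N} cos²( (t/2)·(Φ_{a_1 b} + Σ_{i=1}^{l−1} (−1)^{s_i}·Φ_{a_{i+1} b}) ), and Φ_{ab} = φ_{ab}(0,1) + φ_{ab}(1,0) − φ_{ab}(0,0) − φ_{ab}(1,1) is the signed entangling phase of the pair (a,b). -/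
/-!
Split the pair phase of `x ⌢ j` into a part depending on `x` only, a part depending on `j` only
and the cross terms `φ_{ab}(x_a, j_b)`. The sum over `j` defining `ρ_{xy}` then factorises over
the qubits `b` of the second block, each factor being of the form `e^{iα} + e^{iβ}`, of modulus
`2 |cos ((β - α) / 2)|`, with `β - α = t Σ_a (y_a - x_a) Φ_{ab}`. Hence
`|ρ_{xy}|² = 4^{-k} Π_b cos² ((t/2) Σ_a (y_a - x_a) Φ_{ab})`.

In the sum over pairs `(x, y)`, let `A` be the set where `x` and `y` differ. On `A`,
`y_a - x_a = ±1` with the sign fixed by `x_a`, so each `A` with `|A| = l` contributes `2^{k-l}`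
times the sum over all `2^l` sign patterns; as `cos²` is even, fixing the sign of the first
element of `A` halves that sum.
-/

namespace QGEM

open Finset Complex

def pairPhase {n : ℕ} {α : Type*} (φ : Fin n → Fin n → α → α → ℝ) (J : Fin n → α) : ℝ :=
  ∑ p, ∑ q, if p < q then φ p q (J p) (J q) else 0

noncomputable def qgemState {n : ℕ} (φ : Fin n → Fin n → Fin 2 → Fin 2 → ℝ) (t : ℝ)
    (J : Fin n → Fin 2) : ℂ :=
  ((1 / √(2 ^ n) : ℝ) : ℂ) * Complex.exp (I * ((t * pairPhase φ J : ℝ) : ℂ))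

def reducedDensity {k m : ℕ} (ψ : (Fin (k + m) → Fin 2) → ℂ) (x y : Fin k → Fin 2) : ℂ :=
  ∑ j : Fin m → Fin 2, ψ (Fin.append x j) * starRingEnd ℂ (ψ (Fin.append y j))

def entanglingPhase (f : Fin 2 → Fin 2 → ℝ) : ℝ := f 0 1 + f 1 0 - f 0 0 - f 1 1

theorem pairPhase_append {k m : ℕ} {α : Type*} (φ : Fin (k + m) → Fin (k + m) → α → α → ℝ) :
    ∃ (W : (Fin k → α) → ℝ) (V : (Fin m → α) → ℝ), ∀ x j,
      pairPhase φ (Fin.append x j) =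
        W x + V j + ∑ a, ∑ b, φ (Fin.castAdd m a) (Fin.natAdd k b) (x a) (j b) := by
  refine ⟨fun x => ∑ a, ∑ a', if Fin.castAdd m a < Fin.castAdd m a' then
      φ (Fin.castAdd m a) (Fin.castAdd m a') (x a) (x a') else 0,
    fun j => ∑ b, ∑ b', if Fin.natAdd k b < Fin.natAdd k b' then
      φ (Fin.natAdd k b) (Fin.natAdd k b') (j b) (j b') else 0, fun x j => ?_⟩
  have hlt (a : Fin k) (b : Fin m) : Fin.castAdd m a < Fin.natAdd k b := by
    simp [Fin.lt_def]; omega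
  have hnlt (a : Fin k) (b : Fin m) : ¬ Fin.natAdd k b < Fin.castAdd m a := by
    simp [Fin.lt_def]; omega
  simp only [pairPhase, Fin.sum_univ_add, Fin.append_left, Fin.append_right, hlt, hnlt,
    if_true, if_false, sum_const_zero, add_zero, sum_add_distrib]
  ring

theorem qgemState_mul_conj {n : ℕ} (φ : Fin n → Fin n → Fin 2 → Fin 2 → ℝ) (t : ℝ)
    (J J' : Fin n → Fin 2) :
    qgemState φ t J * starRingEnd ℂ (qgemState φ t J') =
      ((2 ^ n : ℝ)⁻¹ : ℝ) * Complex.exp (I * ((t * (pairPhase φ J - pairPhase φ J') : ℝ) : ℂ)) := by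
  have hnorm : (1 / √(2 ^ n : ℝ)) * (1 / √(2 ^ n)) = (2 ^ n : ℝ)⁻¹ := by
    rw [div_mul_div_comm, one_mul, Real.mul_self_sqrt (by positivity), one_div]
  simp only [qgemState, map_mul, conj_ofReal, ← Complex.exp_conj, conj_I]
  rw [← hnorm]
  push_cast
  rw [mul_mul_mul_comm, ← Complex.exp_add]
  ring_nf

theorem sub_sub_sub_eq_mul_entanglingPhase (f : Fin 2 → Fin 2 → ℝ) (u v : Fin 2) :
    f u 1 - f v 1 - (f u 0 - f v 0) = (((v : ℕ) : ℝ) - (u : ℕ)) * entanglingPhase f := by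
  fin_cases u <;> fin_cases v <;> simp [entanglingPhase] <;> ring

theorem norm_exp_I_mul_add_exp_I_mul (α β : ℝ) :
    ‖Complex.exp (I * α) + Complex.exp (I * β)‖ = 2 * |Real.cos ((β - α) / 2)| := by
  have h : Complex.exp (I * α) + Complex.exp (I * β) =
      Complex.exp (((α + β) / 2 : ℝ) * I) * (2 * Complex.cos ((β - α) / 2 : ℝ)) := by
    rw [two_cos, mul_add, ← Complex.exp_add, ← Complex.exp_add]
    push_cast
    ring_nf
  rw [h, norm_mul, norm_exp_ofReal_mul_I, one_mul, norm_mul, ← ofReal_cos, norm_real,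
    Real.norm_eq_abs]
  norm_num

theorem norm_sum_pi_fin_two_exp {ι : Type*} [Fintype ι] [DecidableEq ι] (c : ℝ)
    (d : ι → Fin 2 → ℝ) :
    ‖∑ j : ι → Fin 2, Complex.exp (I * (c + ∑ b, d b (j b) : ℝ))‖ =
      ∏ b, 2 * |Real.cos ((d b 1 - d b 0) / 2)| := by
  have h : ∀ j : ι → Fin 2, Complex.exp (I * (c + ∑ b, d b (j b) : ℝ)) =
      Complex.exp (I * c) * ∏ b, Complex.exp (I * d b (j b)) := by
    intro j
    rw [← Complex.exp_sum, ← Complex.exp_add]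
    push_cast
    rw [mul_add, mul_sum]
  simp_rw [h, ← mul_sum]
  rw [← Fintype.prod_sum fun b u => Complex.exp (I * d b u), norm_mul, norm_prod]
  simp_rw [Fin.sum_univ_two, norm_exp_I_mul_add_exp_I_mul]
  rw [mul_comm I, norm_exp_ofReal_mul_I, one_mul]

theorem norm_sq_reducedDensity_qgemState {k m : ℕ}
    (φ : Fin (k + m) → Fin (k + m) → Fin 2 → Fin 2 → ℝ) (t : ℝ) (x y : Fin k → Fin 2) :
    ‖reducedDensity (qgemState φ t) x y‖ ^ 2 = (4 ^ k)⁻¹ * ∏ b : Fin m, Real.cos (t / 2 *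
      ∑ a, (((y a : ℕ) : ℝ) - (x a : ℕ)) *
        entanglingPhase (φ (Fin.castAdd m a) (Fin.natAdd k b))) ^ 2 := by
  obtain ⟨W, V, hWV⟩ := pairPhase_append φ
  set d : Fin m → Fin 2 → ℝ := fun b u =>
    t * ∑ a, (φ (Fin.castAdd m a) (Fin.natAdd k b) (x a) u -
      φ (Fin.castAdd m a) (Fin.natAdd k b) (y a) u) with hd
  have hphase (j : Fin m → Fin 2) :
      t * (pairPhase φ (Fin.append x j) - pairPhase φ (Fin.append y j)) =
        t * (W x - W y) + ∑ b, d b (j b) := by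
    simp only [hWV, hd, ← mul_sum]
    rw [sum_comm (γ := Fin m)]
    simp only [sum_sub_distrib]
    ring
  have hcross (b : Fin m) : (d b 1 - d b 0) / 2 = t / 2 * ∑ a, (((y a : ℕ) : ℝ) - (x a : ℕ)) *
      entanglingPhase (φ (Fin.castAdd m a) (Fin.natAdd k b)) := by
    simp only [hd, ← mul_sub, ← sum_sub_distrib, sub_sub_sub_eq_mul_entanglingPhase]
    ring
  have hρ : reducedDensity (qgemState φ t) x y = ((2 ^ (k + m) : ℝ)⁻¹ : ℝ) *
      ∑ j : Fin m → Fin 2, Complex.exp (I * (t * (W x - W y) + ∑ b, d b (j b) : ℝ)) := by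
    simp only [reducedDensity, qgemState_mul_conj, hphase, ← mul_sum]
  rw [hρ, norm_mul, norm_sum_pi_fin_two_exp, norm_real, Real.norm_eq_abs]
  simp only [hcross, mul_pow, prod_pow, sq_abs, prod_mul_distrib,
    prod_const, card_univ, Fintype.card_fin]
  rw [← abs_prod, sq_abs,
    show (4 : ℝ) ^ k = (2 ^ k) ^ 2 by rw [← pow_mul, mul_comm, pow_mul]; norm_num]
  field_simp
  ring

variable {E : Type*} [AddCommGroup E] [Module ℝ E]

theorem sum_pi_comp_embedding {ι κ β M : Type*} [Fintype ι] [Fintype κ] [Fintype β]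
    [DecidableEq ι] [DecidableEq κ] [AddCommMonoid M] (e : ι ↪ κ) (F : (ι → β) → M) :
    ∑ x : κ → β, F (x ∘ e) =
      Fintype.card β ^ (Fintype.card κ - Fintype.card ι) • ∑ τ : ι → β, F τ := by
  let split := Equiv.piEquivPiSubtypeProd (· ∈ Set.range e) fun _ => β
  let onRange := Equiv.arrowCongr (Equiv.ofInjective e e.injective) (Equiv.refl β)
  have hF (f : Set.range e → β) (g : {a // a ∉ Set.range e} → β) :
      F (split.symm (f, g) ∘ e) = F (onRange.symm f) := by
    congr 1
    funext i
    simp [split, onRange, Equiv.piEquivPiSubtypeProd]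
  rw [← split.symm.sum_comp, Fintype.sum_prod_type, sum_comm]
  simp only [hF, sum_const, card_univ]
  rw [onRange.symm.sum_comp]
  rw [Fintype.card_fun, Fintype.card_subtype_compl, Set.card_range_of_injective e.injective]

theorem sum_pi_fin_two_sub_smul {κ : Type*} [Fintype κ] [DecidableEq κ] (g : E → ℝ)
    (v : κ → E) (x : κ → Fin 2) :
    ∑ y : κ → Fin 2, g (∑ a, (((y a : ℕ) : ℝ) - (x a : ℕ)) • v a) =
      ∑ A : Finset κ, g (∑ a ∈ A, (1 - 2 * ((x a : ℕ) : ℝ)) • v a) := by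
  set flip : Finset κ → κ → Fin 2 := fun A a => if a ∈ A then (x a).rev else x a
  have hbij : Function.Bijective flip := by
    refine ⟨fun A B hAB => Finset.ext fun a => ?_, fun y => ⟨univ.filter fun a => y a ≠ x a, ?_⟩⟩
    · have := congrFun hAB a
      by_cases hA : a ∈ A <;> by_cases hB : a ∈ B <;> simp_all [flip, Fin.ext_iff] <;> omega
    · funext a
      have := (x a).isLt
      have := (y a).isLt
      by_cases h : y a = x a
      · simp [flip, h]
      · simp only [flip, mem_filter, mem_univ, true_and, ne_eq, h, not_false_eq_true, if_true]
        rw [Fin.ext_iff, Fin.val_rev]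
        rw [Fin.ext_iff] at h
        omega
  refine (Fintype.sum_bijective flip hbij _ _ fun A => ?_).symm
  have hdiff (a : κ) : (((flip A a : ℕ) : ℝ) - (x a : ℕ)) • v a =
      if a ∈ A then (1 - 2 * ((x a : ℕ) : ℝ)) • v a else 0 := by
    have := (x a).isLt
    by_cases ha : a ∈ A
    · simp only [flip, ha, if_true, Fin.val_rev, Nat.cast_sub (show (x a : ℕ) + 1 ≤ 2 by omega)]
      push_cast
      ring_nf
    · simp [flip, ha]
  simp only [hdiff, sum_ite_mem, univ_inter]

theorem sum_bool_pi_sign_smul {l : ℕ} (g : E → ℝ) (hg : ∀ w, g (-w) = g w)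
    (w : Fin (l + 1) → E) :
    ∑ τ : Fin (l + 1) → Bool, g (∑ i, (if τ i then (-1 : ℝ) else 1) • w i) =
      2 * ∑ s : Fin l → Bool, g (w 0 + ∑ i, (if s i then (-1 : ℝ) else 1) • w i.succ) := by
  have hflip (s : Fin l → Bool) :
      g (-w 0 + ∑ i, (if s i then (-1 : ℝ) else 1) • w i.succ) =
        g (w 0 + ∑ i, (if !s i then (-1 : ℝ) else 1) • w i.succ) := by
    rw [← hg, neg_add, neg_neg, ← sum_neg_distrib]
    congr 2
    refine sum_congr rfl fun i _ => ?_
    cases s i <;> simp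
  rw [← (Fin.consEquiv fun _ => Bool).sum_comp, Fintype.sum_prod_type, Fintype.sum_bool]
  simp only [Fin.consEquiv, Equiv.coe_fn_mk, Fin.sum_univ_succ, Fin.cons_zero, Fin.cons_succ,
    Bool.false_eq_true, if_true, if_false, neg_one_smul, one_smul, hflip]
  rw [Fintype.sum_equiv (Equiv.arrowCongr (Equiv.refl (Fin l)) Equiv.boolNot)
    (fun s => g (w 0 + ∑ i, (if !s i then (-1 : ℝ) else 1) • w i.succ))
    (fun s => g (w 0 + ∑ i, (if s i then (-1 : ℝ) else 1) • w i.succ)) fun s => rfl]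
  ring

theorem sum_pi_fin_two_sign_smul_finset {κ : Type*} [Fintype κ] [LinearOrder κ] (g : E → ℝ)
    (hg : ∀ w, g (-w) = g w) (v : κ → E) {l : ℕ} (A : Finset κ) (h : A.card = l + 1) :
    ∑ x : κ → Fin 2, g (∑ a ∈ A, (1 - 2 * ((x a : ℕ) : ℝ)) • v a) =
      2 ^ (Fintype.card κ - (l + 1)) * (2 * ∑ s : Fin l → Bool, g (v (A.orderEmbOfFin h 0) +
        ∑ i, (if s i then (-1 : ℝ) else 1) • v (A.orderEmbOfFin h i.succ))) := by
  let e : Fin (l + 1) ↪ κ := (A.orderEmbOfFin h).toEmbedding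
  have hA (x : κ → Fin 2) : ∑ a ∈ A, (1 - 2 * ((x a : ℕ) : ℝ)) • v a =
      ∑ i, (1 - 2 * (((x ∘ e) i : ℕ) : ℝ)) • v (e i) := by
    rw [← map_orderEmbOfFin_univ A h, sum_map]
    rfl
  have hsign (u : Fin 2) : 1 - 2 * ((u : ℕ) : ℝ) = if finTwoEquiv u then -1 else 1 := by
    fin_cases u <;> norm_num [finTwoEquiv]
  simp only [hA]
  rw [sum_pi_comp_embedding e
    (fun τ : Fin (l + 1) → Fin 2 => g (∑ i, (1 - 2 * ((τ i : ℕ) : ℝ)) • v (e i))),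
    Fintype.card_fin, Fintype.card_fin,
    nsmul_eq_mul, ← sum_bool_pi_sign_smul g hg fun i => v (A.orderEmbOfFin h i)]
  push_cast
  congr 1
  exact Fintype.sum_equiv (Equiv.arrowCongr (Equiv.refl _) finTwoEquiv) _ _ fun τ => by
    simp [hsign, e]

theorem sum_sum_sub_smul {κ : Type*} [Fintype κ] [LinearOrder κ] (g : E → ℝ)
    (hg : ∀ w, g (-w) = g w) (v : κ → E) :
    ∑ x : κ → Fin 2, ∑ y : κ → Fin 2, g (∑ a, (((y a : ℕ) : ℝ) - (x a : ℕ)) • v a) =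
      2 ^ Fintype.card κ * (g 0 + 2 * ∑ l ∈ range (Fintype.card κ), ((2 : ℝ) ^ (l + 1))⁻¹ *
        ∑ A ∈ powersetCard (l + 1) (univ : Finset κ),
          if h : A.card = l + 1 then
            ∑ s : Fin l → Bool, g (v (A.orderEmbOfFin h 0) +
              ∑ i, (if s i then (-1 : ℝ) else 1) • v (A.orderEmbOfFin h i.succ))
          else 0) := by
  have hlayer (l : ℕ) (hl : l ∈ range (Fintype.card κ)) :
      ∑ A ∈ powersetCard (l + 1) (univ : Finset κ), ∑ x : κ → Fin 2,
          g (∑ a ∈ A, (1 - 2 * ((x a : ℕ) : ℝ)) • v a) =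
        2 ^ Fintype.card κ * 2 * (((2 : ℝ) ^ (l + 1))⁻¹ *
          ∑ A ∈ powersetCard (l + 1) (univ : Finset κ),
          if h : A.card = l + 1 then
            ∑ s : Fin l → Bool, g (v (A.orderEmbOfFin h 0) +
              ∑ i, (if s i then (-1 : ℝ) else 1) • v (A.orderEmbOfFin h i.succ))
          else 0) := by
    have hpow : (2 : ℝ) ^ Fintype.card κ = 2 ^ (Fintype.card κ - (l + 1)) * 2 ^ (l + 1) := by
      rw [← pow_add, Nat.sub_add_cancel (mem_range.1 hl)]
    rw [mul_sum, mul_sum]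
    refine sum_congr rfl fun A hA => ?_
    have hcard := (mem_powersetCard.1 hA).2
    rw [dif_pos hcard, sum_pi_fin_two_sign_smul_finset g hg v A hcard, hpow]
    field_simp
  simp_rw [sum_pi_fin_two_sub_smul]
  rw [sum_comm, ← powerset_univ, sum_powerset, card_univ, sum_range_succ', powersetCard_zero,
    sum_singleton, sum_congr rfl hlayer]
  simp only [sum_empty, sum_const, card_univ, Fintype.card_fun, Fintype.card_fin, nsmul_eq_mul,
    ← mul_sum]
  push_cast
  ring

theorem two_mul_one_sub_inv_four_pow_mul (k : ℕ) (X : ℝ) :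
    2 * (1 - ((4 : ℝ) ^ k)⁻¹ * (2 ^ k * (1 + 2 * X))) =
      ((2 : ℝ) ^ k - 1) / 2 ^ (k - 1) - (2 : ℝ) ^ ((2 : ℤ) - k) * X := by
  rcases k with _ | k
  · norm_num
    ring
  · rw [zpow_sub₀ two_ne_zero, zpow_natCast, show (4 : ℝ) ^ (k + 1) = 2 ^ (k + 1) * 2 ^ (k + 1) by
      rw [← mul_pow]; norm_num]
    simp only [add_tsub_cancel_right, pow_succ]
    field_simp
    ring

end QGEM

theorem N_body_I_concurrence_general (k m : ℕ)
    (φ : Fin (k + m) → Fin (k + m) → Fin 2 → Fin 2 → ℝ) (t : ℝ)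
    (phiJ : (Fin (k + m) → Fin 2) → ℝ)
    (hphiJ : ∀ J, phiJ J = ∑ p, ∑ q, if p < q then φ p q (J p) (J q) else 0)
    (ψ : (Fin (k + m) → Fin 2) → ℂ)
    (hψ : ∀ J, ψ J = Complex.ofReal (1 / Real.sqrt (2 ^ (k + m))) *
      Complex.exp (Complex.I * Complex.ofReal (t * phiJ J)))
    (ρ : (Fin k → Fin 2) → (Fin k → Fin 2) → ℂ)
    (hρ : ∀ x y, ρ x y = ∑ j : Fin m → Fin 2,
      ψ (Fin.append x j) * (starRingEnd ℂ) (ψ (Fin.append y j)))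
    (Φ : Fin k → Fin m → ℝ)
    (hΦ : ∀ a b, Φ a b =
      φ (Fin.castAdd m a) (Fin.natAdd k b) 0 1 +
      φ (Fin.castAdd m a) (Fin.natAdd k b) 1 0 -
      φ (Fin.castAdd m a) (Fin.natAdd k b) 0 0 -
      φ (Fin.castAdd m a) (Fin.natAdd k b) 1 1)
    (Λ : ℝ)
    (hΛ : Λ = ∑ l ∈ Finset.range k, ((2 : ℝ) ^ (l + 1))⁻¹ *
      ∑ A ∈ Finset.powersetCard (l + 1) (Finset.univ : Finset (Fin k)),
        (if h : A.card = l + 1 then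
          ∑ s : Fin l → Bool,
            ∏ b : Fin m,
              Real.cos ((t / 2) * (Φ (A.orderEmbOfFin h 0) b +
                ∑ i : Fin l, (if s i then (-1 : ℝ) else 1) *
                  Φ (A.orderEmbOfFin h i.succ) b)) ^ 2
         else 0)) :
    2 * (1 - ∑ x : Fin k → Fin 2, ∑ y : Fin k → Fin 2, ‖ρ x y‖ ^ 2) =
      ((2 : ℝ) ^ k - 1) / (2 : ℝ) ^ (k - 1) - (2 : ℝ) ^ ((2 : ℤ) - (k : ℤ)) * Λ := by
  obtain rfl : phiJ = QGEM.pairPhase φ := funext hphiJ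
  obtain rfl : ψ = QGEM.qgemState φ t := funext hψ
  obtain rfl : ρ = QGEM.reducedDensity (QGEM.qgemState φ t) := funext₂ hρ
  let g : (Fin m → ℝ) → ℝ := fun θ => ∏ b, Real.cos (t / 2 * θ b) ^ 2
  have hg (θ : Fin m → ℝ) : g (-θ) = g θ := by simp [g]
  have hnorm (x y : Fin k → Fin 2) : ‖QGEM.reducedDensity (QGEM.qgemState φ t) x y‖ ^ 2 =
      ((4 : ℝ) ^ k)⁻¹ * g (∑ a, (((y a : ℕ) : ℝ) - (x a : ℕ)) • Φ a) := by
    simp [QGEM.norm_sq_reducedDensity_qgemState, g, Finset.sum_apply, hΦ, QGEM.entanglingPhase]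
  simp_rw [hnorm, ← Finset.mul_sum, QGEM.sum_sum_sub_smul g hg Φ, Fintype.card_fin]
  rw [hΛ, ← QGEM.two_mul_one_sub_inv_four_pow_mul]
  simp only [g, Pi.add_apply, Finset.sum_apply, Pi.smul_apply, smul_eq_mul, Pi.zero_apply,
    mul_zero, Real.cos_zero, one_pow, Finset.prod_const_one]

/-- (I-concurrence theorem) Writing `N = k + m` with `1 ≤ k ≤ ⌊N/2⌋`, the
squared I-concurrence of the time-evolved N-body QGEM state across the
bipartition of the first `k` qubits versus the rest equals
`(2^k − 1)/2^{k−1} − 2^{2−k}·Λ(t)`, where `Λ(t)` is the stated sum over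
subsets `A = {a_1 < … < a_l}` of the first part and sign choices, of products
of `cos²((t/2)(Φ_{a_1 b} ± Φ_{a_2 b} ± …))` over the second part. -/
theorem N_body_I_concurrence (k m : ℕ) (hk : 1 ≤ k) (hN : 2 ≤ k + m)
    (hkhalf : k ≤ (k + m) / 2)
    (φ : Fin (k + m) → Fin (k + m) → Fin 2 → Fin 2 → ℝ) (t : ℝ)
    (phiJ : (Fin (k + m) → Fin 2) → ℝ)
    (hphiJ : ∀ J, phiJ J = ∑ p, ∑ q, if p < q then φ p q (J p) (J q) else 0)
    (ψ : (Fin (k + m) → Fin 2) → ℂ)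
    (hψ : ∀ J, ψ J = Complex.ofReal (1 / Real.sqrt (2 ^ (k + m))) *
      Complex.exp (Complex.I * Complex.ofReal (t * phiJ J)))
    (ρ : (Fin k → Fin 2) → (Fin k → Fin 2) → ℂ)
    (hρ : ∀ x y, ρ x y = ∑ j : Fin m → Fin 2,
      ψ (Fin.append x j) * (starRingEnd ℂ) (ψ (Fin.append y j)))
    (Φ : Fin k → Fin m → ℝ)
    (hΦ : ∀ a b, Φ a b =
      φ (Fin.castAdd m a) (Fin.natAdd k b) 0 1 +
      φ (Fin.castAdd m a) (Fin.natAdd k b) 1 0 -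
      φ (Fin.castAdd m a) (Fin.natAdd k b) 0 0 -
      φ (Fin.castAdd m a) (Fin.natAdd k b) 1 1)
    (Λ : ℝ)
    (hΛ : Λ = ∑ l ∈ Finset.range k, ((2 : ℝ) ^ (l + 1))⁻¹ *
      ∑ A ∈ Finset.powersetCard (l + 1) (Finset.univ : Finset (Fin k)),
        (if h : A.card = l + 1 then
          ∑ s : Fin l → Bool,
            ∏ b : Fin m,
              Real.cos ((t / 2) * (Φ (A.orderEmbOfFin h 0) b +
                ∑ i : Fin l, (if s i then (-1 : ℝ) else 1) *
                  Φ (A.orderEmbOfFin h i.succ) b)) ^ 2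
         else 0)) :
    2 * (1 - ∑ x : Fin k → Fin 2, ∑ y : Fin k → Fin 2, ‖ρ x y‖ ^ 2) =
      ((2 : ℝ) ^ k - 1) / (2 : ℝ) ^ (k - 1) - (2 : ℝ) ^ ((2 : ℤ) - (k : ℤ)) * Λ :=
  N_body_I_concurrence_general k m φ t phiJ hphiJ ψ hψ ρ hρ Φ hΦ Λ hΛ
end
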